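/- Let A, B ∈ ℝ^{d×r} satisfy AᵀA = BᵀB = I_r. Then inf_{Q ∈ 𝕆(r)} ‖A − BQ‖_F² ≤ ‖AAᵀ − BBᵀ‖_F², and moreover ‖AAᵀ − BBᵀ‖_F² = 2(r − ‖AᵀB‖_F²). (Equivalently, with the principal angles ∠(A,B) defined via the singular value decomposition AᵀB = U·cos(∠(A,B))·Vᵀ, one has inf_{Q ∈ 𝕆(r)} ‖A − BQ‖_F² ≤ 2‖sin(∠(A,B))‖_F² = ‖AAᵀ − BBᵀ‖_F².) -/

import Mathlib

open Matrix

noncomputable section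

/-- Squared Frobenius norm. -/
def frobSq {m n : ℕ} (A : Matrix (Fin m) (Fin n) ℝ) : ℝ := ∑ i, ∑ j, (A i j) ^ 2

/-!
Expanding squares, `‖AAᵀ - BBᵀ‖² = 2(r - ‖AᵀB‖²)` and, for orthogonal `Q`,
`‖A - BQ‖² = 2(r - tr S)` with `S = (BQ)ᵀA`, whose Frobenius norm is that of `AᵀB`.
Take `Q` maximising `tr (QᵀBᵀA)` over the compact orthogonal group. The first-order condition
along plane rotations makes `S` symmetric, comparison with Householder reflections makes it
positive semidefinite, and `S ≤ 1` because `A` and `BQ` have orthonormal columns.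
Then `tr S - tr S² = tr (S (1 - S)) ≥ 0`, which is the inequality.
-/

section Variational

variable {n : Type*} [Fintype n] [DecidableEq n]

lemma trace_mul_nonneg_of_posSemidef {S T : Matrix n n ℝ} (hS : S.PosSemidef)
    (hT : T.PosSemidef) : 0 ≤ trace (S * T) := by
  open scoped MatrixOrder in
  obtain ⟨Y, rfl⟩ := CStarAlgebra.nonneg_iff_eq_star_mul_self.mp hS.nonneg
  rw [star_eq_conjTranspose, Matrix.mul_assoc, trace_mul_comm, Matrix.mul_assoc, ← Matrix.mul_assoc]
  exact (hT.mul_mul_conjTranspose_same Y).trace_nonneg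

lemma trace_mul_self_le_trace {S : Matrix n n ℝ} (hS : S.PosSemidef)
    (hS₁ : (1 - S).PosSemidef) : trace (S * S) ≤ trace S := by
  have h := trace_mul_nonneg_of_posSemidef hS hS₁
  rw [Matrix.mul_sub, Matrix.mul_one, trace_sub] at h
  linarith

def planeRotation (i j : n) (θ : ℝ) : Matrix n n ℝ :=
  1 + (Real.cos θ - 1) • (single i i 1 + single j j 1) + Real.sin θ • (single j i 1 - single i j 1)

lemma planeRotation_transpose_mul_self {i j : n} (hij : i ≠ j) (θ : ℝ) :
    (planeRotation i j θ)ᵀ * planeRotation i j θ = 1 := by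
  simp only [planeRotation, transpose_add, transpose_smul, transpose_one, transpose_sub,
    transpose_single, Matrix.add_mul, Matrix.mul_add, Matrix.smul_mul, Matrix.mul_smul,
    Matrix.one_mul, Matrix.sub_mul, Matrix.mul_sub, smul_sub, smul_add,
    single_mul_single_same, single_mul_single_of_ne, ne_eq, hij, Ne.symm hij,
    not_false_eq_true, mul_one, smul_smul, smul_zero]
  match_scalars <;> first | ring1 | linear_combination Real.sin_sq_add_cos_sq θ

lemma trace_planeRotation_transpose_mul (i j : n) (θ : ℝ) (S : Matrix n n ℝ) :
    trace ((planeRotation i j θ)ᵀ * S)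
      = trace S + (Real.cos θ - 1) * (S i i + S j j) + Real.sin θ * (S j i - S i j) := by
  simp [planeRotation, transpose_single, Matrix.add_mul, Matrix.sub_mul, trace_add, trace_sub,
    trace_smul, trace_single_mul]
  ring

lemma isSymm_of_forall_trace_transpose_mul_le {S : Matrix n n ℝ}
    (hS : ∀ R : Matrix n n ℝ, Rᵀ * R = 1 → trace (Rᵀ * S) ≤ trace S) : S.IsSymm := by
  ext i j
  rcases eq_or_ne j i with rfl | hji
  · rfl
  let f : ℝ → ℝ := fun θ => (Real.cos θ - 1) * (S j j + S i i) + Real.sin θ * (S i j - S j i)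
  have hmax : IsLocalMax f 0 := by
    refine IsMaxOn.isLocalMax (fun θ _ => ?_) Filter.univ_mem
    have hrot := hS _ (planeRotation_transpose_mul_self hji θ)
    rw [trace_planeRotation_transpose_mul] at hrot
    simp only [Set.mem_ofPred_eq, f, Real.cos_zero, Real.sin_zero]
    linarith
  have hderiv : HasDerivAt f (S i j - S j i) 0 :=
    ((((Real.hasDerivAt_cos 0).sub_const 1).mul_const _).add
      ((Real.hasDerivAt_sin 0).mul_const _)).congr_deriv (by simp)
  have hcrit := hmax.hasDerivAt_eq_zero hderiv
  rw [transpose_apply]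
  linarith

-- `2 / (x ⬝ᵥ x)` is `0` at `x = 0`, so `householder 0 = 1`.
def householder (x : n → ℝ) : Matrix n n ℝ := 1 - (2 / (x ⬝ᵥ x)) • vecMulVec x x

lemma householder_transpose_mul_self (x : n → ℝ) : (householder x)ᵀ * householder x = 1 := by
  by_cases hx : x ⬝ᵥ x = 0
  · simp [householder, hx]
  simp only [householder, transpose_sub, transpose_one, transpose_smul, transpose_vecMulVec,
    Matrix.sub_mul, Matrix.mul_sub, Matrix.one_mul, Matrix.mul_one, Matrix.smul_mul,
    Matrix.mul_smul, vecMulVec_mul_vecMulVec, vecMulVec_smul, smul_smul]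
  rw [div_mul_cancel₀ 2 hx]
  module

lemma trace_householder_transpose_mul (x : n → ℝ) (S : Matrix n n ℝ) :
    trace ((householder x)ᵀ * S) = trace S - 2 / (x ⬝ᵥ x) * (x ⬝ᵥ S *ᵥ x) := by
  simp [householder, transpose_vecMulVec, Matrix.sub_mul, vecMulVec_mul, dotProduct_mulVec,
    dotProduct_comm]

lemma posSemidef_of_forall_trace_transpose_mul_le {S : Matrix n n ℝ}
    (hS : ∀ R : Matrix n n ℝ, Rᵀ * R = 1 → trace (Rᵀ * S) ≤ trace S) : S.PosSemidef := by
  refine .of_dotProduct_mulVec_nonneg ?_ fun x => ?_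
  · exact isHermitian_iff_isSymm.mpr (isSymm_of_forall_trace_transpose_mul_le hS)
  have hrefl := hS _ (householder_transpose_mul_self x)
  rw [trace_householder_transpose_mul] at hrefl
  rw [star_trivial]
  rcases eq_or_ne x 0 with rfl | hx
  · simp
  have hc : 0 < 2 / (x ⬝ᵥ x) :=
    div_pos two_pos ((dotProduct_self_star_nonneg x).lt_of_ne' (by simpa using hx))
  exact (mul_nonneg_iff_of_pos_left hc).mp (by linarith)

lemma isCompact_setOf_transpose_mul_self_eq_one :
    IsCompact {Q : Matrix n n ℝ | Qᵀ * Q = 1} := by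
  have hunitary : {Q : Matrix n n ℝ | Qᵀ * Q = 1} = unitaryGroup n ℝ := by
    ext Q
    simp [mem_unitaryGroup_iff', star_eq_conjTranspose]
  have hclosed : IsClosed (unitaryGroup n ℝ : Set (Matrix n n ℝ)) := isClosed_unitary
  rw [hunitary]
  open scoped Matrix.Norms.Elementwise in
  exact Metric.isCompact_of_isClosed_isBounded
    hclosed (isBounded_iff_forall_norm_le.2 ⟨1, fun _ hU => entrywise_sup_norm_bound_of_unitary hU⟩)

lemma exists_orthogonal_forall_trace_transpose_mul_le (M : Matrix n n ℝ) :
    ∃ Q : Matrix n n ℝ, Qᵀ * Q = 1 ∧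
      ∀ R : Matrix n n ℝ, Rᵀ * R = 1 → trace (Rᵀ * (Qᵀ * M)) ≤ trace (Qᵀ * M) := by
  have hcont : Continuous fun Q : Matrix n n ℝ => trace (Qᵀ * M) := by fun_prop
  obtain ⟨Q, hQ, hmax⟩ :=
    isCompact_setOf_transpose_mul_self_eq_one.exists_isMaxOn ⟨1, by simp⟩ hcont.continuousOn
  refine ⟨Q, hQ, fun R hR => ?_⟩
  have hQR : (Q * R)ᵀ * (Q * R) = 1 := by
    rw [transpose_mul, Matrix.mul_assoc, ← Matrix.mul_assoc Qᵀ, hQ, Matrix.one_mul, hR]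
  simpa [transpose_mul, Matrix.mul_assoc] using hmax hQR

end Variational

section Orthonormal

variable {m n : Type*} [Fintype m] [Fintype n] [DecidableEq n]

lemma dotProduct_mulVec_transpose_mul_le {U V : Matrix m n ℝ} (hU : Uᵀ * U = 1)
    (hV : Vᵀ * V = 1) (x : n → ℝ) : x ⬝ᵥ (Uᵀ * V) *ᵥ x ≤ x ⬝ᵥ x := by
  have hdot : ∀ W W' : Matrix m n ℝ, x ⬝ᵥ (Wᵀ * W') *ᵥ x = W *ᵥ x ⬝ᵥ W' *ᵥ x := by
    intro W W'
    rw [← mulVec_mulVec, dotProduct_mulVec, vecMul_transpose]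
  have hUU : U *ᵥ x ⬝ᵥ U *ᵥ x = x ⬝ᵥ x := by rw [← hdot, hU, one_mulVec]
  have hVV : V *ᵥ x ⬝ᵥ V *ᵥ x = x ⬝ᵥ x := by rw [← hdot, hV, one_mulVec]
  have hsq := dotProduct_self_star_nonneg (U *ᵥ x - V *ᵥ x)
  rw [star_trivial, sub_dotProduct, dotProduct_sub, dotProduct_sub, dotProduct_comm (V *ᵥ x),
    hUU, hVV] at hsq
  rw [hdot]
  linarith

lemma posSemidef_one_sub_transpose_mul {U V : Matrix m n ℝ} (hU : Uᵀ * U = 1)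
    (hV : Vᵀ * V = 1) (hUV : (Uᵀ * V).IsHermitian) : (1 - Uᵀ * V).PosSemidef := by
  refine .of_dotProduct_mulVec_nonneg (isHermitian_one.sub hUV) fun x => ?_
  rw [star_trivial, sub_mulVec, one_mulVec, dotProduct_sub, sub_nonneg]
  exact dotProduct_mulVec_transpose_mul_le hU hV x

end Orthonormal

section Frobenius

variable {d m n : ℕ}

lemma frobSq_eq_trace (X : Matrix (Fin m) (Fin n) ℝ) : frobSq X = trace (Xᵀ * X) := by
  simp only [frobSq, trace, diag, mul_apply, transpose_apply, sq]
  exact Finset.sum_comm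

lemma frobSq_nonneg (X : Matrix (Fin m) (Fin n) ℝ) : 0 ≤ frobSq X := by
  unfold frobSq
  positivity

lemma frobSq_transpose (X : Matrix (Fin m) (Fin n) ℝ) : frobSq Xᵀ = frobSq X :=
  Finset.sum_comm

lemma frobSq_transpose_mul_of_mul_transpose_eq_one {Q : Matrix (Fin m) (Fin m) ℝ}
    (hQ : Q * Qᵀ = 1) (X : Matrix (Fin m) (Fin n) ℝ) : frobSq (Qᵀ * X) = frobSq X := by
  rw [frobSq_eq_trace, frobSq_eq_trace, transpose_mul, transpose_transpose, Matrix.mul_assoc,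
    ← Matrix.mul_assoc Q, hQ, Matrix.one_mul]

lemma frobSq_sub (X Y : Matrix (Fin m) (Fin n) ℝ) :
    frobSq (X - Y) = frobSq X + frobSq Y - 2 * trace (Yᵀ * X) := by
  rw [frobSq_eq_trace, frobSq_eq_trace, frobSq_eq_trace, transpose_sub, Matrix.sub_mul,
    Matrix.mul_sub, Matrix.mul_sub, trace_sub, trace_sub, trace_sub,
    ← trace_transpose (Xᵀ * Y), transpose_mul, transpose_transpose]
  ring

lemma frobSq_of_transpose_mul_self_eq_one {A : Matrix (Fin d) (Fin n) ℝ} (hA : Aᵀ * A = 1) :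
    frobSq A = n := by
  rw [frobSq_eq_trace, hA, trace_one, Fintype.card_fin]

lemma frobSq_mul_transpose_of_transpose_mul_self_eq_one {A : Matrix (Fin d) (Fin n) ℝ}
    (hA : Aᵀ * A = 1) : frobSq (A * Aᵀ) = n := by
  rw [frobSq_eq_trace, transpose_mul, transpose_transpose, Matrix.mul_assoc,
    ← Matrix.mul_assoc Aᵀ, hA, Matrix.one_mul, trace_mul_comm, hA, trace_one, Fintype.card_fin]

lemma frobSq_sub_of_orthonormal {A C : Matrix (Fin d) (Fin n) ℝ} (hA : Aᵀ * A = 1)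
    (hC : Cᵀ * C = 1) : frobSq (A - C) = 2 * (n - trace (Cᵀ * A)) := by
  rw [frobSq_sub, frobSq_of_transpose_mul_self_eq_one hA, frobSq_of_transpose_mul_self_eq_one hC]
  ring

lemma frobSq_mul_transpose_sub_mul_transpose {A B : Matrix (Fin d) (Fin n) ℝ}
    (hA : Aᵀ * A = 1) (hB : Bᵀ * B = 1) :
    frobSq (A * Aᵀ - B * Bᵀ) = 2 * (n - frobSq (Aᵀ * B)) := by
  have hcross : trace ((B * Bᵀ)ᵀ * (A * Aᵀ)) = frobSq (Aᵀ * B) := by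
    rw [← frobSq_transpose, frobSq_eq_trace, ← Matrix.mul_assoc, trace_mul_comm]
    simp only [transpose_mul, transpose_transpose, Matrix.mul_assoc]
  rw [frobSq_sub, frobSq_mul_transpose_of_transpose_mul_self_eq_one hA,
    frobSq_mul_transpose_of_transpose_mul_self_eq_one hB, hcross]
  ring

end Frobenius

/-- **Lemma C.3.**  If `A, B ∈ ℝ^{d×r}` have orthonormal columns (`AᵀA = BᵀB = I_r`), then
`inf_{Q ∈ 𝕆(r)} ‖A − BQ‖_F² ≤ ‖AAᵀ − BBᵀ‖_F²`, and moreover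
`‖AAᵀ − BBᵀ‖_F² = 2(r − ‖AᵀB‖_F²)`  (equivalently, with principal angles,
`inf_Q ‖A − BQ‖_F² ≤ 2‖sin ∠(A,B)‖_F² = ‖AAᵀ − BBᵀ‖_F²`). -/
theorem orthonormal_frame_procrustes_bound
    {d r : ℕ} (A B : Matrix (Fin d) (Fin r) ℝ)
    (hA : Aᵀ * A = 1) (hB : Bᵀ * B = 1) :
    sInf {t : ℝ | ∃ Q : Matrix (Fin r) (Fin r) ℝ, Qᵀ * Q = 1 ∧ t = frobSq (A - B * Q)}
        ≤ frobSq (A * Aᵀ - B * Bᵀ)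
    ∧ frobSq (A * Aᵀ - B * Bᵀ) = 2 * ((r : ℝ) - frobSq (Aᵀ * B)) := by
  have hproj := frobSq_mul_transpose_sub_mul_transpose hA hB
  refine ⟨?_, hproj⟩
  obtain ⟨Q, hQ, hmax⟩ := exists_orthogonal_forall_trace_transpose_mul_le (Bᵀ * A)
  have hBQ : (B * Q)ᵀ * (B * Q) = 1 := by
    rw [transpose_mul, Matrix.mul_assoc, ← Matrix.mul_assoc Bᵀ, hB, Matrix.one_mul, hQ]
  set S := (B * Q)ᵀ * A with hS
  rw [← Matrix.mul_assoc, ← transpose_mul, ← hS] at hmax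
  have hSpsd := posSemidef_of_forall_trace_transpose_mul_le hmax
  have hSle := posSemidef_one_sub_transpose_mul hBQ hA hSpsd.isHermitian
  have hfrob : frobSq (Aᵀ * B) = trace (S * S) := by
    rw [← frobSq_transpose, ← frobSq_transpose_mul_of_mul_transpose_eq_one (mul_eq_one_comm.mp hQ),
      transpose_mul, transpose_transpose, ← Matrix.mul_assoc, ← transpose_mul, frobSq_eq_trace,
      (isHermitian_iff_isSymm.mp hSpsd.isHermitian).eq]
  calc sInf _ ≤ frobSq (A - B * Q) := by
        refine csInf_le ⟨0, ?_⟩ ⟨Q, hQ, rfl⟩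
        rintro _ ⟨_, _, rfl⟩
        exact frobSq_nonneg _
    _ = 2 * (r - trace S) := frobSq_sub_of_orthonormal hA hBQ
    _ ≤ 2 * (r - frobSq (Aᵀ * B)) := by
        rw [hfrob]
        gcongr
        exact trace_mul_self_le_trace hSpsd hSle
    _ = frobSq (A * Aᵀ - B * Bᵀ) := hproj.symm
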